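/- Let (E_k(t))_{k≥1} be real-valued, differentiable in t, with E_k(0) ≤ 0 for all k, E_k(t) → 0 uniformly on compact time intervals as k → ∞, ∂_t E_1 ≤ −E_1 + E_2, and ∂_t E_k ≤ (k−1)(E_{k−1} − E_k) + k(E_{k+1} − E_k) for k ≥ 2. Then E_k(t) ≤ 0 for all k ≥ 1 and t ≥ 0. -/

import Mathlib

/-!
Perturb to `F k t = E k t - ε * (1 + t)`: it is negative at `t = 0`, and by uniform convergence
also for all large `k` on `[0, T]`, so only finitely many indices can ever reach `0`. At the first
time one of them reaches `0`, say `F j`, all `E k` are `≤ E j`, so the right-hand side of the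
inequality for `∂ₜ E j` is `≤ 0`; but `F j` has just risen to `0` from below, so `∂ₜ E j ≥ ε`.
Hence `E k t < ε * (1 + t)` for every `ε > 0`.
-/

open Set Filter Topology

theorem HasDerivAt.nonneg_of_isLocalMaxOn_Iic {f : ℝ → ℝ} {f' a : ℝ} (hf : HasDerivAt f f' a)
    (hmax : IsLocalMaxOn f (Iic a) a) : 0 ≤ f' := by
  have hcone : (-1 : ℝ) ∈ posTangentConeAt (Iic a) a :=
    mem_posTangentConeAt_of_segment_subset <|
      (convex_Iic a).segment_subset self_mem_Iic (by simp)
  simpa using hmax.hasFDerivWithinAt_nonpos hf.hasDerivWithinAt.hasFDerivWithinAt hcone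

theorem ContinuousOn.exists_first_zero {g : ℝ → ℝ} {a b t : ℝ} (hg : ContinuousOn g (Icc a b))
    (ha : g a < 0) (ht : t ∈ Icc a b) (hgt : 0 ≤ g t) :
    ∃ c ∈ Ioc a b, g c = 0 ∧ ∀ s ∈ Ico a c, g s < 0 := by
  have hS : IsCompact (Icc a b ∩ g ⁻¹' Ici 0) := isCompact_Icc.of_isClosed_subset
    (hg.preimage_isClosed_of_isClosed isClosed_Icc isClosed_Ici) inter_subset_left
  obtain ⟨c, ⟨hc, hgc⟩, hmin⟩ := hS.exists_isMinOn ⟨t, ht, hgt⟩ continuousOn_id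
  have hbefore : ∀ s ∈ Ico a c, g s < 0 := fun s hs ↦
    not_le.mp fun hgs ↦ (hs.2.trans_le (hmin ⟨⟨hs.1, hs.2.le.trans hc.2⟩, hgs⟩)).false
  have hac : a < c := hc.1.lt_of_ne fun h ↦ by rw [← h] at hgc; exact (ha.trans_le hgc).false
  refine ⟨c, ⟨hac, hc.2⟩, le_antisymm ?_ hgc, hbefore⟩
  by_contra! hpos
  obtain ⟨s, hs, hgs⟩ := intermediate_value_Icc hac.le (hg.mono (Icc_subset_Icc_right hc.2))
    ⟨ha.le, hpos.le⟩
  exact (hbefore s ⟨hs.1, hs.2.lt_of_ne (by rintro rfl; exact hpos.ne' hgs)⟩).ne hgs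

theorem Finset.exists_first_zero {ι : Type*} {s : Finset ι} {F : ι → ℝ → ℝ} {a b t : ℝ} {i : ι}
    (hF : ∀ i ∈ s, ContinuousOn (F i) (Set.Icc a b)) (ha : ∀ i ∈ s, F i a < 0) (hi : i ∈ s)
    (ht : t ∈ Set.Icc a b) (hFt : 0 ≤ F i t) :
    ∃ c ∈ Set.Ioc a b, ∃ j ∈ s, F j c = 0 ∧ (∀ i ∈ s, F i c ≤ 0) ∧
      ∀ t ∈ Set.Ico a c, F j t < 0 := by
  have hs : s.Nonempty := ⟨i, hi⟩
  obtain ⟨c, hc, hgc, hbefore⟩ := (ContinuousOn.finset_sup'_apply hs hF).exists_first_zero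
    ((s.sup'_lt_iff hs).mpr ha) ht (hFt.trans (s.le_sup' (F · t) hi))
  obtain ⟨j, hj, hFj⟩ := s.exists_mem_eq_sup' hs (F · c)
  exact ⟨c, hc, j, hj, hFj ▸ hgc, fun i hi ↦ hgc ▸ s.le_sup' (F · c) hi,
    fun t ht ↦ (s.le_sup' (F · t) hj).trans_lt (hbefore t ht)⟩

section ComparisonSystem

variable {E : ℕ → ℝ → ℝ}

theorem deriv_nonpos_of_forall_le (h1 : ∀ t ≥ (0:ℝ), deriv (E 1) t ≤ -E 1 t + E 2 t)
    (hk : ∀ k : ℕ, 2 ≤ k → ∀ t ≥ (0:ℝ),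
      deriv (E k) t ≤ ((k : ℝ) - 1) * (E (k - 1) t - E k t) + (k : ℝ) * (E (k + 1) t - E k t))
    {j : ℕ} (hj : 1 ≤ j) {t : ℝ} (ht : 0 ≤ t) (hle : ∀ k ≥ 1, E k t ≤ E j t) :
    deriv (E j) t ≤ 0 := by
  obtain rfl | hj2 := hj.eq_or_lt
  · linarith [h1 t ht, hle 2 (by norm_num)]
  · have hjR : (2 : ℝ) ≤ j := by exact_mod_cast hj2
    have hlow := hle (j - 1) (by omega)
    have hup := hle (j + 1) (by omega)
    nlinarith [hk j hj2 t ht]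

theorem lt_mul_one_add_of_tendstoUniformlyOn (hdiff : ∀ k ≥ 1, Differentiable ℝ (E k))
    (hE0 : ∀ k ≥ 1, E k 0 ≤ 0) (h1 : ∀ t ≥ (0:ℝ), deriv (E 1) t ≤ -E 1 t + E 2 t)
    (hk : ∀ k : ℕ, 2 ≤ k → ∀ t ≥ (0:ℝ),
      deriv (E k) t ≤ ((k : ℝ) - 1) * (E (k - 1) t - E k t) + (k : ℝ) * (E (k + 1) t - E k t))
    {T ε : ℝ} (hunif : TendstoUniformlyOn E (fun _ => 0) atTop (Icc 0 T)) (hε : 0 < ε) :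
    ∀ k ≥ 1, ∀ t ∈ Icc 0 T, E k t < ε * (1 + t) := by
  set F : ℕ → ℝ → ℝ := fun k t => E k t - ε * (1 + t)
  obtain ⟨N, hN⟩ := eventually_atTop.mp (hunif.eventually_forall_lt hε fun _ _ ↦ le_rfl)
  have htail : ∀ k ≥ N, ∀ t ∈ Icc 0 T, F k t < 0 := fun k hk t ht ↦ by
    simp only [F]; nlinarith [hN k hk t ht, ht.1]
  set s := Finset.Icc 1 (max N 1)
  have hcover : ∀ k ≥ 1, k ∈ s ∨ N ≤ k := fun k hk ↦ by
    by_cases hkN : k ≤ max N 1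
    · exact .inl (Finset.mem_Icc.mpr ⟨hk, hkN⟩)
    · exact .inr (by omega)
  have hhead : ∀ k ∈ s, ∀ t ∈ Icc 0 T, F k t < 0 := by
    by_contra! ⟨k, hks, t, ht, hFt⟩
    obtain ⟨t₀, ht₀, j, hjs, hFj, hFs, hbefore⟩ := Finset.exists_first_zero (F := F)
      (fun k hk ↦ ((hdiff k (Finset.mem_Icc.mp hk).1).continuous.sub (by fun_prop)).continuousOn)
      (fun k hk ↦ by simp only [F]; linarith [hE0 k (Finset.mem_Icc.mp hk).1]) hks ht hFt
    have hj : 1 ≤ j := (Finset.mem_Icc.mp hjs).1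
    have hmax : IsLocalMaxOn (F j) (Iic t₀) t₀ := by
      filter_upwards [Ioc_mem_nhdsLE ht₀.1] with t ht
      obtain hlt | rfl := ht.2.lt_or_eq
      · exact hFj ▸ (hbefore t ⟨ht.1.le, hlt⟩).le
      · exact le_rfl
    have hderiv : HasDerivAt (F j) (deriv (E j) t₀ - ε) t₀ := by
      have := (hdiff j hj t₀).hasDerivAt.sub (((hasDerivAt_id' t₀).const_add 1).const_mul ε)
      rwa [mul_one] at this
    have hle : ∀ k ≥ 1, E k t₀ ≤ E j t₀ := fun k hk ↦ by
      have := (hcover k hk).elim (hFs k) fun hkN ↦ (htail k hkN t₀ (Ioc_subset_Icc_self ht₀)).le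
      simp only [F] at this hFj; linarith
    linarith [hderiv.nonneg_of_isLocalMaxOn_Iic hmax,
      deriv_nonpos_of_forall_le h1 hk hj ht₀.1.le hle]
  intro k hk t ht
  have := (hcover k hk).elim (hhead k · t ht) (htail k · t ht)
  simp only [F] at this; linarith

end ComparisonSystem

theorem stmt_17 (E : ℕ → ℝ → ℝ)
    (hdiff : ∀ k ≥ 1, Differentiable ℝ (E k))
    (hE0 : ∀ k ≥ 1, E k 0 ≤ 0)
    (hunif : ∀ T > (0:ℝ), TendstoUniformlyOn (fun k t => E k t) (fun _ => 0)
      Filter.atTop (Set.Icc 0 T))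
    (h1 : ∀ t ≥ (0:ℝ), deriv (E 1) t ≤ -E 1 t + E 2 t)
    (hk : ∀ k : ℕ, 2 ≤ k → ∀ t ≥ (0:ℝ),
      deriv (E k) t ≤ ((k : ℝ) - 1) * (E (k - 1) t - E k t) + (k : ℝ) * (E (k + 1) t - E k t)) :
    ∀ k ≥ 1, ∀ t ≥ (0:ℝ), E k t ≤ 0 := by
  intro k hk1 t ht
  by_contra! hpos
  have hε : 0 < E k t / (1 + t) := div_pos hpos (by linarith)
  have := lt_mul_one_add_of_tendstoUniformlyOn hdiff hE0 h1 hk (hunif (t + 1) (by linarith)) hε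
    k hk1 t ⟨ht, by linarith⟩
  rw [div_mul_cancel₀ _ (by linarith)] at this
  exact this.false
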